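/- arXiv:1412.0564 — 5 statements merged into one kernel-verified Lean document; each statement's English description precedes it below -/
import Mathlib

section
/- Let E be a real normed vector space. For smooth sections e₁ = (X₁,α₁), e₂ = (X₂,α₂), e₃ = (X₃,α₃) of the generalized tangent bundle of E, the Dorfman-type bracket satisfies the Leibniz (Jacobi-type) identity: [e₁,[e₂,e₃]] = [[e₁,e₂],e₃] + [e₂,[e₁,e₃]]. -/
/-!
STATEMENT 3: On the generalized tangent bundle of a real normed space E (sections are
pairs (X, α) of a smooth vector field X : E → E and a smooth 1-form α : E → E'), the
Dorfman-type bracket [e₁,e₂] = ([X₁,X₂], L_{X₁}α₂ − ι_{X₂} dα₁) satisfies the Leibniz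
(Jacobi-type) identity [e₁,[e₂,e₃]] = [[e₁,e₂],e₃] + [e₂,[e₁,e₃]].
-/

variable {E : Type*} [NormedAddCommGroup E] [NormedSpace ℝ E]

/-- Lie bracket of vector fields: `[X,Y](x) = DY(x)(X(x)) − DX(x)(Y(x))`. -/
noncomputable def vecBracket (X Y : E → E) : E → E :=
  fun x => fderiv ℝ Y x (X x) - fderiv ℝ X x (Y x)

/-- Lie derivative of a 1-form along a vector field:
`(L_X β)(x)(v) = (Dβ(x)(X(x)))(v) + β(x)(DX(x)(v))`. -/
noncomputable def lieDeriv (X : E → E) (β : E → (E →L[ℝ] ℝ)) : E → (E →L[ℝ] ℝ) :=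
  fun x => fderiv ℝ β x (X x) + (β x).comp (fderiv ℝ X x)

/-- Contraction of the exterior derivative of a 1-form with a vector field:
`(ι_Y dα)(x)(v) = (Dα(x)(Y(x)))(v) − (Dα(x)(v))(Y(x))`. -/
noncomputable def iotaD (Y : E → E) (α : E → (E →L[ℝ] ℝ)) : E → (E →L[ℝ] ℝ) :=
  fun x => fderiv ℝ α x (Y x) - (fderiv ℝ α x).flip (Y x)

/-- Dorfman-type bracket on sections of the generalized tangent bundle:
`[e₁,e₂] = ([X₁,X₂], L_{X₁}α₂ − ι_{X₂} dα₁)`. -/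
noncomputable def dorfman (e₁ e₂ : (E → E) × (E → (E →L[ℝ] ℝ))) :
    (E → E) × (E → (E →L[ℝ] ℝ)) :=
  (vecBracket e₁.1 e₂.1, fun x => lieDeriv e₁.1 e₂.2 x - iotaD e₂.1 e₁.2 x)

/-!
The vector-field component is the Jacobi identity for the Lie bracket. The 1-form component is
linear in each of α₁, α₂, α₃ and splits into three identities of Cartan calculus:
`L_{[X,Y]} = [L_X, L_Y]` (the α₃ terms), `[L_X, ι_Y d] = ι_{[X,Y]} d` (the α₂ terms), and the
same identity combined with Cartan's formula `L_Y = d ι_Y + ι_Y d` and `d² = 0` (the α₁ terms).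
In the flat model each of these is a direct computation of second derivatives, closed by their
symmetry.
-/

open ContinuousLinearMap

section Calculus

variable {𝕜 : Type*} [NontriviallyNormedField 𝕜] {V F G H : Type*}
  [NormedAddCommGroup V] [NormedSpace 𝕜 V] [NormedAddCommGroup F] [NormedSpace 𝕜 F]
  [NormedAddCommGroup G] [NormedSpace 𝕜 G] [NormedAddCommGroup H] [NormedSpace 𝕜 H]

theorem ContDiff.differentiable_fderiv {f : V → F} (hf : ContDiff 𝕜 2 f) :
    Differentiable 𝕜 (fderiv 𝕜 f) :=
  (hf.fderiv_right (m := 1) le_rfl).differentiable one_ne_zero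

theorem ContDiff.fderiv_fderiv_apply_comm [IsRCLikeNormedField 𝕜] {f : V → F}
    (hf : ContDiff 𝕜 2 f) (x u v : V) :
    fderiv 𝕜 (fderiv 𝕜 f) x u v = fderiv 𝕜 (fderiv 𝕜 f) x v u :=
  hf.contDiffAt.isSymmSndFDerivAt (by simp) u v

theorem fderiv_clm_apply_apply {c : V → F →L[𝕜] G} {u : V → F} {x : V}
    (hc : DifferentiableAt 𝕜 c x) (hu : DifferentiableAt 𝕜 u x) (v : V) :
    fderiv 𝕜 (fun y => c y (u y)) x v = fderiv 𝕜 c x v (u x) + c x (fderiv 𝕜 u x v) := by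
  rw [fderiv_clm_apply hc hu, add_apply, comp_apply, flip_apply, add_comm]

theorem fderiv_clm_comp_apply_apply {c : V → G →L[𝕜] H} {d : V → F →L[𝕜] G} {x : V}
    (hc : DifferentiableAt 𝕜 c x) (hd : DifferentiableAt 𝕜 d x) (v : V) (w : F) :
    fderiv 𝕜 (fun y => (c y).comp (d y)) x v w
      = fderiv 𝕜 c x v (d x w) + c x (fderiv 𝕜 d x v w) := by
  rw [fderiv_clm_comp hc hd]
  simp only [add_apply, comp_apply, flip_apply, compL_apply]
  rw [add_comm]

theorem fderiv_clm_flip_apply (c : V → F →L[𝕜] G →L[𝕜] H) (x v : V) :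
    fderiv 𝕜 (fun y => (c y).flip) x v = (fderiv 𝕜 c x v).flip := by
  have h := LinearIsometryEquiv.comp_fderiv (𝕜 := 𝕜) (F := G →L[𝕜] F →L[𝕜] H)
    (flipₗᵢ 𝕜 F G H) (f := c) (x := x)
  rw [coe_flipₗᵢ] at h
  exact congrArg (· v) h

theorem DifferentiableAt.clm_flip {c : V → F →L[𝕜] G →L[𝕜] H} {x : V}
    (hc : DifferentiableAt 𝕜 c x) : DifferentiableAt 𝕜 (fun y => (c y).flip) x := by
  have h := (LinearIsometryEquiv.comp_differentiableAt_iff (𝕜 := 𝕜) (F := G →L[𝕜] F →L[𝕜] H)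
    (flipₗᵢ 𝕜 F G H) (f := c) (x := x)).mpr hc
  rwa [coe_flipₗᵢ] at h

end Calculus

section CartanCalculus

variable {X Y Z : E → E} {α β : E → E →L[ℝ] ℝ}

theorem vecBracket_apply (x : E) :
    vecBracket X Y x = fderiv ℝ Y x (X x) - fderiv ℝ X x (Y x) := rfl

theorem lieDeriv_apply_apply (x w : E) :
    lieDeriv X α x w = fderiv ℝ α x (X x) w + α x (fderiv ℝ X x w) := rfl

theorem iotaD_apply_apply (x w : E) :
    iotaD Y α x w = fderiv ℝ α x (Y x) w - fderiv ℝ α x w (Y x) := rfl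

theorem dorfman_def (e₁ e₂ : (E → E) × (E → E →L[ℝ] ℝ)) :
    dorfman e₁ e₂ = (vecBracket e₁.1 e₂.1, lieDeriv e₁.1 e₂.2 - iotaD e₂.1 e₁.2) := rfl

theorem lieDeriv_sub (hα : Differentiable ℝ α) (hβ : Differentiable ℝ β) :
    lieDeriv X (α - β) = lieDeriv X α - lieDeriv X β := by
  ext x w
  simp only [lieDeriv_apply_apply, Pi.sub_apply, sub_apply, fderiv_sub (hα x) (hβ x)]
  abel

theorem iotaD_add (hα : Differentiable ℝ α) (hβ : Differentiable ℝ β) :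
    iotaD Y (α + β) = iotaD Y α + iotaD Y β := by
  ext x w
  simp only [iotaD_apply_apply, Pi.add_apply, add_apply, fderiv_add (hα x) (hβ x)]
  abel

theorem iotaD_sub (hα : Differentiable ℝ α) (hβ : Differentiable ℝ β) :
    iotaD Y (α - β) = iotaD Y α - iotaD Y β := by
  ext x w
  simp only [iotaD_apply_apply, Pi.sub_apply, sub_apply, fderiv_sub (hα x) (hβ x)]
  abel

theorem differentiable_lieDeriv (hX : ContDiff ℝ 2 X) (hα : ContDiff ℝ 2 α) :
    Differentiable ℝ (lieDeriv X α) := fun x =>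
  ((hα.differentiable_fderiv x).clm_apply (hX.differentiable two_ne_zero x)).add
    ((hα.differentiable two_ne_zero x).clm_comp (hX.differentiable_fderiv x))

theorem differentiable_iotaD (hY : ContDiff ℝ 2 Y) (hα : ContDiff ℝ 2 α) :
    Differentiable ℝ (iotaD Y α) := fun x =>
  ((hα.differentiable_fderiv x).clm_apply (hY.differentiable two_ne_zero x)).sub
    ((hα.differentiable_fderiv x).clm_flip.clm_apply (hY.differentiable two_ne_zero x))

theorem fderiv_vecBracket_apply (hX : ContDiff ℝ 2 X) (hY : ContDiff ℝ 2 Y) (x u : E) :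
    fderiv ℝ (vecBracket X Y) x u
      = fderiv ℝ (fderiv ℝ Y) x u (X x) + fderiv ℝ Y x (fderiv ℝ X x u)
        - (fderiv ℝ (fderiv ℝ X) x u (Y x) + fderiv ℝ X x (fderiv ℝ Y x u)) := by
  have hXx := hX.differentiable two_ne_zero x
  have hYx := hY.differentiable two_ne_zero x
  have hDX := hX.differentiable_fderiv x
  have hDY := hY.differentiable_fderiv x
  unfold vecBracket
  rw [fderiv_fun_sub (hDY.clm_apply hXx) (hDX.clm_apply hYx), sub_apply,
    fderiv_clm_apply_apply hDY hXx, fderiv_clm_apply_apply hDX hYx]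

theorem fderiv_lieDeriv_apply_apply (hX : ContDiff ℝ 2 X) (hα : ContDiff ℝ 2 α) (x u w : E) :
    fderiv ℝ (lieDeriv X α) x u w
      = fderiv ℝ (fderiv ℝ α) x u (X x) w + fderiv ℝ α x (fderiv ℝ X x u) w
        + (fderiv ℝ α x u (fderiv ℝ X x w) + α x (fderiv ℝ (fderiv ℝ X) x u w)) := by
  have hXx := hX.differentiable two_ne_zero x
  have hαx := hα.differentiable two_ne_zero x
  have hDX := hX.differentiable_fderiv x
  have hDα := hα.differentiable_fderiv x
  unfold lieDeriv
  rw [fderiv_fun_add (hDα.clm_apply hXx) (hαx.clm_comp hDX), add_apply, add_apply,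
    fderiv_clm_apply_apply hDα hXx, fderiv_clm_comp_apply_apply hαx hDX, add_apply]

theorem fderiv_iotaD_apply_apply (hY : ContDiff ℝ 2 Y) (hα : ContDiff ℝ 2 α) (x u w : E) :
    fderiv ℝ (iotaD Y α) x u w
      = fderiv ℝ (fderiv ℝ α) x u (Y x) w + fderiv ℝ α x (fderiv ℝ Y x u) w
        - (fderiv ℝ (fderiv ℝ α) x u w (Y x) + fderiv ℝ α x w (fderiv ℝ Y x u)) := by
  have hYx := hY.differentiable two_ne_zero x
  have hDα := hα.differentiable_fderiv x
  unfold iotaD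
  rw [fderiv_fun_sub (hDα.clm_apply hYx) (hDα.clm_flip.clm_apply hYx), sub_apply, sub_apply,
    fderiv_clm_apply_apply hDα hYx, fderiv_clm_apply_apply hDα.clm_flip hYx,
    fderiv_clm_flip_apply, add_apply, add_apply, flip_apply, flip_apply]

theorem vecBracket_jacobi (hX : ContDiff ℝ 2 X) (hY : ContDiff ℝ 2 Y) (hZ : ContDiff ℝ 2 Z) :
    vecBracket X (vecBracket Y Z)
      = vecBracket (vecBracket X Y) Z + vecBracket Y (vecBracket X Z) := by
  ext x
  simp only [Pi.add_apply, vecBracket_apply, fderiv_vecBracket_apply hX hY,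
    fderiv_vecBracket_apply hX hZ, fderiv_vecBracket_apply hY hZ, map_sub]
  -- `simp` uses the symmetry of second derivatives as a permutative rule, putting each
  -- second-derivative term into a normal form so that `abel` can match them.
  simp only [hX.fderiv_fderiv_apply_comm x, hY.fderiv_fderiv_apply_comm x,
    hZ.fderiv_fderiv_apply_comm x]
  abel

theorem lieDeriv_vecBracket (hX : ContDiff ℝ 2 X) (hY : ContDiff ℝ 2 Y) (hα : ContDiff ℝ 2 α) :
    lieDeriv (vecBracket X Y) α = lieDeriv X (lieDeriv Y α) - lieDeriv Y (lieDeriv X α) := by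
  ext x w
  simp only [Pi.sub_apply, sub_apply, lieDeriv_apply_apply, vecBracket_apply,
    fderiv_lieDeriv_apply_apply hX hα, fderiv_lieDeriv_apply_apply hY hα,
    fderiv_vecBracket_apply hX hY, map_sub, map_add]
  simp only [hX.fderiv_fderiv_apply_comm x, hY.fderiv_fderiv_apply_comm x,
    hα.fderiv_fderiv_apply_comm x]
  abel

theorem lieDeriv_iotaD (hX : ContDiff ℝ 2 X) (hY : ContDiff ℝ 2 Y) (hα : ContDiff ℝ 2 α) :
    lieDeriv X (iotaD Y α) = iotaD Y (lieDeriv X α) + iotaD (vecBracket X Y) α := by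
  ext x w
  simp only [Pi.add_apply, add_apply, lieDeriv_apply_apply, iotaD_apply_apply, vecBracket_apply,
    fderiv_lieDeriv_apply_apply hX hα, fderiv_iotaD_apply_apply hY hα, map_sub,
    sub_apply]
  simp only [hX.fderiv_fderiv_apply_comm x, hα.fderiv_fderiv_apply_comm x]
  abel

-- Cartan's formula `L_Y α = d(ι_Y α) + ι_Y dα`.
theorem lieDeriv_eq_fderiv_add_iotaD (hY : Differentiable ℝ Y) (hα : Differentiable ℝ α) :
    lieDeriv Y α = fderiv ℝ (fun x => α x (Y x)) + iotaD Y α := by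
  ext x w
  simp only [Pi.add_apply, add_apply, lieDeriv_apply_apply, iotaD_apply_apply,
    fderiv_clm_apply_apply (hα x) (hY x)]
  abel

-- `d² = 0`.
theorem iotaD_fderiv {f : E → ℝ} (hf : ContDiff ℝ 2 f) : iotaD Y (fderiv ℝ f) = 0 := by
  ext x w
  rw [iotaD_apply_apply, hf.fderiv_fderiv_apply_comm, sub_self, Pi.zero_apply, zero_apply]

theorem lieDeriv_iotaD_eq_iotaD_iotaD (hY : ContDiff ℝ 2 Y) (hZ : ContDiff ℝ 2 Z)
    (hα : ContDiff ℝ 2 α) :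
    lieDeriv Y (iotaD Z α) = iotaD Z (iotaD Y α) + iotaD (vecBracket Y Z) α := by
  have hαY : ContDiff ℝ 2 (fun x => α x (Y x)) := hα.clm_apply hY
  rw [lieDeriv_iotaD hY hZ hα,
    lieDeriv_eq_fderiv_add_iotaD (hY.differentiable two_ne_zero) (hα.differentiable two_ne_zero),
    iotaD_add hαY.differentiable_fderiv (differentiable_iotaD hY hα), iotaD_fderiv hαY, zero_add]

end CartanCalculus

theorem dorfman_leibniz (e₁ e₂ e₃ : (E → E) × (E → (E →L[ℝ] ℝ)))
    (h₁ : ContDiff ℝ (⊤ : ℕ∞) e₁.1) (h₁' : ContDiff ℝ (⊤ : ℕ∞) e₁.2)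
    (h₂ : ContDiff ℝ (⊤ : ℕ∞) e₂.1) (h₂' : ContDiff ℝ (⊤ : ℕ∞) e₂.2)
    (h₃ : ContDiff ℝ (⊤ : ℕ∞) e₃.1) (h₃' : ContDiff ℝ (⊤ : ℕ∞) e₃.2) :
    dorfman e₁ (dorfman e₂ e₃) = dorfman (dorfman e₁ e₂) e₃ + dorfman e₂ (dorfman e₁ e₃) := by
  have two_le : (2 : WithTop ℕ∞) ≤ (⊤ : ℕ∞) := WithTop.coe_le_coe.mpr le_top
  have hX₁ := h₁.of_le two_le
  have hX₂ := h₂.of_le two_le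
  have hX₃ := h₃.of_le two_le
  have hα₁ := h₁'.of_le two_le
  have hα₂ := h₂'.of_le two_le
  have hα₃ := h₃'.of_le two_le
  simp only [dorfman_def, Prod.mk_add_mk, Prod.mk.injEq]
  refine ⟨vecBracket_jacobi hX₁ hX₂ hX₃, ?_⟩
  rw [lieDeriv_sub (differentiable_lieDeriv hX₂ hα₃) (differentiable_iotaD hX₃ hα₂),
    iotaD_sub (differentiable_lieDeriv hX₁ hα₂) (differentiable_iotaD hX₂ hα₁),
    lieDeriv_sub (differentiable_lieDeriv hX₁ hα₃) (differentiable_iotaD hX₃ hα₁),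
    lieDeriv_vecBracket hX₁ hX₂ hα₃, lieDeriv_iotaD hX₁ hX₃ hα₂,
    lieDeriv_iotaD_eq_iotaD_iotaD hX₂ hX₃ hα₁]
  abel
end

section
/- Let E be a real normed vector space. For smooth sections e₁ = (X₁,α₁), e₂ = (X₂,α₂), e₃ = (X₃,α₃) of the generalized tangent bundle of E, the anchor and the pairing are compatible with the Dorfman-type bracket: for all x ∈ E, D(Θ(e₂,e₃))(x)(X₁(x)) = Θ([e₁,e₂], e₃)(x) + Θ(e₂, [e₁,e₃])(x). -/
/-!
In the flat model the compatibility is the Leibniz rule. Differentiating the function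
`α(Y)` along `X` gives `(L_X α)(Y) + α([X,Y])`, so the derivative of `Θ(e₂,e₃)` along `X₁` is
`Θ([e₁,e₂], e₃) + Θ(e₂, [e₁,e₃])` up to the two contraction terms
`ι_{X₂} dα₁ (X₃) + ι_{X₃} dα₁ (X₂) = dα₁(X₂,X₃) + dα₁(X₃,X₂)`, which cancel because `dα₁` is
alternating.
-/

variable {E : Type*} [NormedAddCommGroup E] [NormedSpace ℝ E]

/-- The pairing `Θ(e₁,e₂)(x) = α₁(x)(X₂(x)) + α₂(x)(X₁(x))`. -/
def pairingTheta (e₁ e₂ : (E → E) × (E → (E →L[ℝ] ℝ))) : E → ℝ :=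
  fun x => e₁.2 x (e₂.1 x) + e₂.2 x (e₁.1 x)

section

variable {X Y Z : E → E} {α β : E → E →L[ℝ] ℝ} {x : E}

theorem iotaD_apply_add_iotaD_apply :
    iotaD Y α x (Z x) + iotaD Z α x (Y x) = 0 := by
  simp only [iotaD, sub_apply, ContinuousLinearMap.flip_apply]
  ring

theorem fderiv_apply_eq_lieDeriv_add_vecBracket (hβ : DifferentiableAt ℝ β x)
    (hY : DifferentiableAt ℝ Y x) :
    fderiv ℝ (fun y => β y (Y y)) x (X x) = lieDeriv X β x (Y x) + β x (vecBracket X Y x) := by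
  simp only [fderiv_clm_apply hβ hY, lieDeriv, vecBracket, add_apply,
    ContinuousLinearMap.comp_apply, ContinuousLinearMap.flip_apply, map_sub]
  ring

end

theorem dorfman_anchor_pairing_general (e₁ e₂ e₃ : (E → E) × (E → (E →L[ℝ] ℝ)))
    (h₂ : ContDiff ℝ (⊤ : ℕ∞) e₂.1) (h₂' : ContDiff ℝ (⊤ : ℕ∞) e₂.2)
    (h₃ : ContDiff ℝ (⊤ : ℕ∞) e₃.1) (h₃' : ContDiff ℝ (⊤ : ℕ∞) e₃.2) :
    ∀ x : E, fderiv ℝ (pairingTheta e₂ e₃) x (e₁.1 x) =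
      pairingTheta (dorfman e₁ e₂) e₃ x + pairingTheta e₂ (dorfman e₁ e₃) x := by
  intro x
  have hY₂ := (h₂.differentiable (by simp)).differentiableAt (x := x)
  have hα₂ := (h₂'.differentiable (by simp)).differentiableAt (x := x)
  have hY₃ := (h₃.differentiable (by simp)).differentiableAt (x := x)
  have hα₃ := (h₃'.differentiable (by simp)).differentiableAt (x := x)
  have hΘ : fderiv ℝ (pairingTheta e₂ e₃) x =
      fderiv ℝ (fun y => e₂.2 y (e₃.1 y)) x + fderiv ℝ (fun y => e₃.2 y (e₂.1 y)) x :=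
    fderiv_fun_add (hα₂.clm_apply hY₃) (hα₃.clm_apply hY₂)
  have hι : iotaD e₂.1 e₁.2 x (e₃.1 x) + iotaD e₃.1 e₁.2 x (e₂.1 x) = 0 :=
    iotaD_apply_add_iotaD_apply
  rw [hΘ, add_apply, fderiv_apply_eq_lieDeriv_add_vecBracket hα₂ hY₃,
    fderiv_apply_eq_lieDeriv_add_vecBracket hα₃ hY₂]
  simp only [pairingTheta, dorfman, sub_apply]
  linear_combination hι

theorem dorfman_anchor_pairing (e₁ e₂ e₃ : (E → E) × (E → (E →L[ℝ] ℝ)))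
    (h₁ : ContDiff ℝ (⊤ : ℕ∞) e₁.1) (h₁' : ContDiff ℝ (⊤ : ℕ∞) e₁.2)
    (h₂ : ContDiff ℝ (⊤ : ℕ∞) e₂.1) (h₂' : ContDiff ℝ (⊤ : ℕ∞) e₂.2)
    (h₃ : ContDiff ℝ (⊤ : ℕ∞) e₃.1) (h₃' : ContDiff ℝ (⊤ : ℕ∞) e₃.2) :
    ∀ x : E, fderiv ℝ (pairingTheta e₂ e₃) x (e₁.1 x) =
      pairingTheta (dorfman e₁ e₂) e₃ x + pairingTheta e₂ (dorfman e₁ e₃) x :=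
  dorfman_anchor_pairing_general e₁ e₂ e₃ h₂ h₂' h₃ h₃'
end

section
/- Let E be a real normed vector space. For smooth sections e₁ = (X₁,α₁), e₂ = (X₂,α₂) of the generalized tangent bundle of E, the symmetrization of the Dorfman-type bracket equals the exterior derivative of the pairing: [e₁,e₂] + [e₂,e₁] = (0, d(Θ(e₁,e₂))), i.e. the vector-field components cancel and the 1-form components add up to x ↦ D(Θ(e₁,e₂))(x). -/
/-!
This is Cartan's formula `L_X α = ι_X dα + d(α(X))`, which in the flat model is the product
rule for `x ↦ α(x)(X(x))`. Substituting it for both Lie derivatives in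
`[e₁,e₂] + [e₂,e₁]`, the contraction terms cancel in pairs and what is left is
`d(α₂(X₁)) + d(α₁(X₂)) = dΘ(e₁,e₂)`; the vector parts cancel by antisymmetry of the Lie bracket.
-/

variable {E : Type*} [NormedAddCommGroup E] [NormedSpace ℝ E]

theorem vecBracket_add_vecBracket_swap (X Y : E → E) :
    vecBracket X Y + vecBracket Y X = 0 := by
  funext x
  simp [vecBracket]

theorem lieDeriv_eq_iotaD_add_fderiv_apply {X : E → E} {α : E → (E →L[ℝ] ℝ)} {x : E}
    (hX : DifferentiableAt ℝ X x) (hα : DifferentiableAt ℝ α x) :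
    lieDeriv X α x = iotaD X α x + fderiv ℝ (fun y => α y (X y)) x := by
  rw [fderiv_clm_apply hα hX, lieDeriv, iotaD]
  abel

theorem fderiv_pairingTheta {e₁ e₂ : (E → E) × (E → (E →L[ℝ] ℝ))} {x : E}
    (h₁ : DifferentiableAt ℝ e₁.1 x) (h₁' : DifferentiableAt ℝ e₁.2 x)
    (h₂ : DifferentiableAt ℝ e₂.1 x) (h₂' : DifferentiableAt ℝ e₂.2 x) :
    fderiv ℝ (pairingTheta e₁ e₂) x =
      fderiv ℝ (fun y => e₁.2 y (e₂.1 y)) x + fderiv ℝ (fun y => e₂.2 y (e₁.1 y)) x :=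
  fderiv_add (h₁'.clm_apply h₂) (h₂'.clm_apply h₁)

theorem dorfman_symmetrization (e₁ e₂ : (E → E) × (E → (E →L[ℝ] ℝ)))
    (h₁ : ContDiff ℝ (⊤ : ℕ∞) e₁.1) (h₁' : ContDiff ℝ (⊤ : ℕ∞) e₁.2)
    (h₂ : ContDiff ℝ (⊤ : ℕ∞) e₂.1) (h₂' : ContDiff ℝ (⊤ : ℕ∞) e₂.2) :
    dorfman e₁ e₂ + dorfman e₂ e₁ =
      ((0 : E → E), fun x => fderiv ℝ (pairingTheta e₁ e₂) x) := by
  refine Prod.ext (vecBracket_add_vecBracket_swap e₁.1 e₂.1) (funext fun x => ?_)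
  have d₁ := h₁.differentiable (by simp) x
  have d₁' := h₁'.differentiable (by simp) x
  have d₂ := h₂.differentiable (by simp) x
  have d₂' := h₂'.differentiable (by simp) x
  simp only [dorfman, Prod.snd_add, Pi.add_apply]
  rw [lieDeriv_eq_iotaD_add_fderiv_apply d₁ d₂', lieDeriv_eq_iotaD_add_fderiv_apply d₂ d₁',
    fderiv_pairingTheta d₁ d₁' d₂ d₂']
  abel
end

section
/- Let E be a real normed vector space. For smooth sections e₁ = (X₁,α₁), e₂ = (X₂,α₂) of the generalized tangent bundle of E and a smooth function f : E → ℝ, the Courant bracket satisfies the anomalous Leibniz rule: ⟦e₁, f·e₂⟧ = f·⟦e₁,e₂⟧ + (λ(e₁)f)·e₂ − (1/2)·Θ(e₁,e₂)·(0, df), where f·(X,α) denotes pointwise scaling of both components, (λ(e₁)f)(x) = Df(x)(X₁(x)), and (0, df) is the section with zero vector-field component and 1-form component x ↦ Df(x). -/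
/-!
Every term of the Courant bracket is first order in each entry, so scaling `e₂` by `f` only
produces the terms in which `f` itself is differentiated. The Lie bracket and the Lie derivative
`L_{X₁}` contribute `Df(X₁)·e₂`; the Lie derivative `L_{fX₂}` contributes `−α₁(X₂)·df`, and the
exterior derivative contributes `(1/2)(α₁(X₂) − α₂(X₁))·df`. The last two add up to
`−(1/2)Θ(e₁,e₂)·df`.
-/

variable {E : Type*} [NormedAddCommGroup E] [NormedSpace ℝ E]

/-- The Courant bracket
`⟦e₁,e₂⟧ = ([X₁,X₂], L_{X₁}α₂ − L_{X₂}α₁ + (1/2) d(ι_{X₂}α₁ − ι_{X₁}α₂))`. -/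
noncomputable def courant (e₁ e₂ : (E → E) × (E → (E →L[ℝ] ℝ))) :
    (E → E) × (E → (E →L[ℝ] ℝ)) :=
  (vecBracket e₁.1 e₂.1,
    fun x => lieDeriv e₁.1 e₂.2 x - lieDeriv e₂.1 e₁.2 x +
      (1 / 2 : ℝ) • fderiv ℝ (fun y => e₁.2 y (e₂.1 y) - e₂.2 y (e₁.1 y)) x)

/-- Pointwise scaling of a section of the generalized tangent bundle by a function. -/
noncomputable def smulSec (g : E → ℝ) (e : (E → E) × (E → (E →L[ℝ] ℝ))) :
    (E → E) × (E → (E →L[ℝ] ℝ)) :=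
  (fun x => g x • e.1 x, fun x => g x • e.2 x)

section LeibnizRules

variable {f : E → ℝ} {x : E}

theorem vecBracket_smul_right_apply (X : E → E) {Y : E → E}
    (hf : DifferentiableAt ℝ f x) (hY : DifferentiableAt ℝ Y x) :
    vecBracket X (fun y => f y • Y y) x = f x • vecBracket X Y x + fderiv ℝ f x (X x) • Y x := by
  simp only [vecBracket, fderiv_fun_smul hf hY, add_apply, smul_apply,
    ContinuousLinearMap.smulRight_apply, map_smul]
  module

theorem lieDeriv_smul_form_apply (X : E → E) {β : E → (E →L[ℝ] ℝ)}
    (hf : DifferentiableAt ℝ f x) (hβ : DifferentiableAt ℝ β x) :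
    lieDeriv X (fun y => f y • β y) x = f x • lieDeriv X β x + fderiv ℝ f x (X x) • β x := by
  simp only [lieDeriv, fderiv_fun_smul hf hβ, add_apply, smul_apply,
    ContinuousLinearMap.smulRight_apply, ContinuousLinearMap.smul_comp]
  module

theorem lieDeriv_smul_field_apply {Y : E → E} (α : E → (E →L[ℝ] ℝ))
    (hf : DifferentiableAt ℝ f x) (hY : DifferentiableAt ℝ Y x) :
    lieDeriv (fun y => f y • Y y) α x = f x • lieDeriv Y α x + α x (Y x) • fderiv ℝ f x := by
  simp only [lieDeriv, fderiv_fun_smul hf hY, map_smul, ContinuousLinearMap.comp_add,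
    ContinuousLinearMap.comp_smul]
  ext v
  simp only [add_apply, smul_apply, ContinuousLinearMap.comp_apply,
    ContinuousLinearMap.smulRight_apply, map_smul, smul_eq_mul]
  ring

theorem fderiv_skewPairing_smul {X₁ X₂ : E → E} {α₁ α₂ : E → (E →L[ℝ] ℝ)}
    (hf : DifferentiableAt ℝ f x) (hX₁ : DifferentiableAt ℝ X₁ x)
    (hα₁ : DifferentiableAt ℝ α₁ x) (hX₂ : DifferentiableAt ℝ X₂ x)
    (hα₂ : DifferentiableAt ℝ α₂ x) :
    fderiv ℝ (fun y => α₁ y (f y • X₂ y) - (f y • α₂ y) (X₁ y)) x =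
      f x • fderiv ℝ (fun y => α₁ y (X₂ y) - α₂ y (X₁ y)) x +
        (α₁ x (X₂ x) - α₂ x (X₁ x)) • fderiv ℝ f x := by
  have hprod : (fun y => α₁ y (f y • X₂ y) - (f y • α₂ y) (X₁ y)) =
      fun y => f y * (α₁ y (X₂ y) - α₂ y (X₁ y)) := by
    funext y
    simp only [map_smul, smul_apply, smul_eq_mul, mul_sub]
  rw [hprod, fderiv_fun_mul hf ((hα₁.clm_apply hX₂).fun_sub (hα₂.clm_apply hX₁))]

end LeibnizRules

theorem courant_leibniz_rule (e₁ e₂ : (E → E) × (E → (E →L[ℝ] ℝ))) (f : E → ℝ)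
    (h₁ : ContDiff ℝ (⊤ : ℕ∞) e₁.1) (h₁' : ContDiff ℝ (⊤ : ℕ∞) e₁.2)
    (h₂ : ContDiff ℝ (⊤ : ℕ∞) e₂.1) (h₂' : ContDiff ℝ (⊤ : ℕ∞) e₂.2)
    (hf : ContDiff ℝ (⊤ : ℕ∞) f) :
    courant e₁ (smulSec f e₂) =
      smulSec f (courant e₁ e₂) +
      smulSec (fun x => fderiv ℝ f x (e₁.1 x)) e₂ -
      smulSec (fun x => (1 / 2 : ℝ) * pairingTheta e₁ e₂ x)
        ((0 : E → E), fun x => fderiv ℝ f x) := by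
  obtain ⟨X₁, α₁⟩ := e₁
  obtain ⟨X₂, α₂⟩ := e₂
  have hX₁ := h₁.differentiable (by simp)
  have hα₁ := h₁'.differentiable (by simp)
  have hX₂ := h₂.differentiable (by simp)
  have hα₂ := h₂'.differentiable (by simp)
  have hf := hf.differentiable (by simp)
  refine Prod.ext (funext fun x => ?_) (funext fun x => ?_)
  · simp only [courant, smulSec, Prod.fst_add, Prod.fst_sub, Pi.add_apply, Pi.sub_apply,
      Pi.zero_apply, smul_zero, sub_zero]
    exact vecBracket_smul_right_apply X₁ (hf x) (hX₂ x)
  · simp only [courant, smulSec, pairingTheta, Prod.snd_add, Prod.snd_sub, Pi.add_apply,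
      Pi.sub_apply]
    rw [lieDeriv_smul_form_apply X₁ (hf x) (hα₂ x), lieDeriv_smul_field_apply α₁ (hf x) (hX₂ x),
      fderiv_skewPairing_smul (hf x) (hX₁ x) (hα₁ x) (hX₂ x) (hα₂ x)]
    module
end

section
/- Let E be a real normed vector space, let ω : E × E → ℝ be a continuous bilinear map with ω(u,v) = −ω(v,u), and suppose the map J : E → E' given by J(v) = ω(v,·) is a continuous linear equivalence (strong constant symplectic form). For a smooth 1-form α : E → E' define the vector field ♯α(x) = J⁻¹(α(x)), and for smooth 1-forms α, β define the bracket {α,β} = L_{♯α}β − L_{♯β}α + d(ω(♯α,♯β)), where ω(♯α,♯β) is the smooth function x ↦ ω(♯α(x), ♯β(x)). Then this bracket satisfies the Jacobi identity: for all smooth 1-forms α, β, γ, {{α,β},γ} + {{β,γ},α} + {{γ,α},β} = 0; hence the smooth 1-forms on E form a Lie algebra under {·,·}. -/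
/-!
STATEMENT 9: Let ω be a strong constant symplectic form on a real normed space E, with
associated continuous linear equivalence J : E ≃ E', J(v) = ω(v,·).  For smooth 1-forms
define ♯α(x) = J⁻¹(α(x)) and the bracket {α,β} = L_{♯α}β − L_{♯β}α + d(ω(♯α,♯β)).
Then the bracket satisfies the Jacobi identity
{{α,β},γ} + {{β,γ},α} + {{γ,α},β} = 0.
-/

variable {E : Type*} [NormedAddCommGroup E] [NormedSpace ℝ E]

/-- The vector field `♯α(x) = J⁻¹(α(x))` associated to a 1-form `α`. -/
noncomputable def sharp (J : E ≃L[ℝ] (E →L[ℝ] ℝ)) (α : E → (E →L[ℝ] ℝ)) : E → E :=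
  fun x => J.symm (α x)

/-- The bracket of 1-forms `{α,β} = L_{♯α}β − L_{♯β}α + d(ω(♯α,♯β))` induced by the
symplectic form `ω` (with musical isomorphism `J`). -/
noncomputable def oneFormBracket (ω : E →L[ℝ] E →L[ℝ] ℝ) (J : E ≃L[ℝ] (E →L[ℝ] ℝ))
    (α β : E → (E →L[ℝ] ℝ)) : E → (E →L[ℝ] ℝ) :=
  fun x => lieDeriv (sharp J α) β x - lieDeriv (sharp J β) α x +
    fderiv ℝ (fun y => ω (sharp J α y) (sharp J β y)) x

/-!
The anchor `♯` intertwines the bracket of 1-forms with the Lie bracket of vector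
fields, `♯{α,β} = [♯α,♯β]`, because the terms `β(D♯α ·)` and `α(D♯β ·)` of the Lie derivatives
cancel against `d(ω(♯α,♯β))` by skew-symmetry. Since `♯` is injective, the Jacobi identity is
inherited from that of vector fields, which rests on the symmetry of second derivatives.
-/

namespace VectorField

variable {𝕜 : Type*} [NontriviallyNormedField 𝕜] {F : Type*} [NormedAddCommGroup F]
  [NormedSpace 𝕜 F] {n : WithTop ℕ∞}

theorem lieBracket_jacobi (hn : minSmoothness 𝕜 2 ≤ n) {U V W : F → F} {x : F}
    (hU : ContDiffAt 𝕜 n U x) (hV : ContDiffAt 𝕜 n V x) (hW : ContDiffAt 𝕜 n W x) :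
    lieBracket 𝕜 (lieBracket 𝕜 U V) W x + lieBracket 𝕜 (lieBracket 𝕜 V W) U x +
      lieBracket 𝕜 (lieBracket 𝕜 W U) V x = 0 := by
  have hWU : lieBracket 𝕜 W U = -lieBracket 𝕜 U W := funext fun _ ↦ lieBracket_swap
  have hneg : lieBracket 𝕜 (-lieBracket 𝕜 U W) V x = -lieBracket 𝕜 (lieBracket 𝕜 U W) V x := by
    simp only [lieBracket, fderiv_neg, Pi.neg_apply, map_neg, neg_apply]
    abel
  rw [hWU, hneg, lieBracket_swap (V := lieBracket 𝕜 V W), leibniz_identity_lieBracket hn hU hV hW,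
    lieBracket_swap (V := V)]
  abel

end VectorField

open VectorField

section OneFormBracket

variable {ω : E →L[ℝ] E →L[ℝ] ℝ} {J : E ≃L[ℝ] (E →L[ℝ] ℝ)}

theorem hasFDerivAt_sharp {α : E → (E →L[ℝ] ℝ)} {x : E} (hα : DifferentiableAt ℝ α x) :
    HasFDerivAt (sharp J α) ((J.symm : (E →L[ℝ] ℝ) →L[ℝ] E).comp (fderiv ℝ α x)) x :=
  (J.symm : (E →L[ℝ] ℝ) →L[ℝ] E).hasFDerivAt.comp x hα.hasFDerivAt

theorem contDiff_sharp {n : WithTop ℕ∞} {α : E → (E →L[ℝ] ℝ)} (hα : ContDiff ℝ n α) :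
    ContDiff ℝ n (sharp J α) :=
  (J.symm : (E →L[ℝ] ℝ) →L[ℝ] E).contDiff.comp hα

theorem apply_sharp (hJ : ∀ v : E, (J v : E →L[ℝ] ℝ) = ω v) (α : E → (E →L[ℝ] ℝ)) (x : E) :
    ω (sharp J α x) = α x := by
  rw [← hJ, sharp, ContinuousLinearEquiv.apply_symm_apply]

theorem oneFormBracket_apply (hskew : ∀ u v : E, ω u v = - ω v u)
    (hJ : ∀ v : E, (J v : E →L[ℝ] ℝ) = ω v) {α β : E → (E →L[ℝ] ℝ)} {x : E}
    (hα : DifferentiableAt ℝ α x) (hβ : DifferentiableAt ℝ β x) :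
    oneFormBracket ω J α β x = fderiv ℝ β x (sharp J α x) - fderiv ℝ α x (sharp J β x) := by
  have hX := hasFDerivAt_sharp (J := J) hα
  have hY := hasFDerivAt_sharp (J := J) hβ
  have hpair : HasFDerivAt (fun y ↦ ω (sharp J α y) (sharp J β y)) _ x :=
    (ω.hasFDerivAt.comp x hX).clm_apply hY
  rw [oneFormBracket, lieDeriv, lieDeriv, hpair.fderiv, hX.fderiv, hY.fderiv]
  ext v
  simp only [add_apply, sub_apply, ContinuousLinearMap.comp_apply,
    ContinuousLinearMap.flip_apply, ContinuousLinearEquiv.coe_coe, Function.comp_apply,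
    hskew (J.symm _) (sharp J β x), apply_sharp hJ]
  ring

theorem sharp_oneFormBracket (hskew : ∀ u v : E, ω u v = - ω v u)
    (hJ : ∀ v : E, (J v : E →L[ℝ] ℝ) = ω v) {α β : E → (E →L[ℝ] ℝ)}
    (hα : Differentiable ℝ α) (hβ : Differentiable ℝ β) :
    sharp J (oneFormBracket ω J α β) = lieBracket ℝ (sharp J α) (sharp J β) := by
  ext x : 1
  simp [sharp, oneFormBracket_apply hskew hJ (hα x) (hβ x), lieBracket,
    (hasFDerivAt_sharp (hα x)).fderiv, (hasFDerivAt_sharp (hβ x)).fderiv]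

theorem contDiff_oneFormBracket (hskew : ∀ u v : E, ω u v = - ω v u)
    (hJ : ∀ v : E, (J v : E →L[ℝ] ℝ) = ω v) {m n : WithTop ℕ∞} {α β : E → (E →L[ℝ] ℝ)}
    (hα : ContDiff ℝ m α) (hβ : ContDiff ℝ m β) (hnm : n + 1 ≤ m) :
    ContDiff ℝ n (oneFormBracket ω J α β) := by
  have hm : m ≠ 0 := (zero_lt_one.trans_le (le_add_self.trans hnm)).ne'
  have hsharp := sharp_oneFormBracket hskew hJ (hα.differentiable hm) (hβ.differentiable hm)
  have hJsharp : oneFormBracket ω J α β = J ∘ sharp J (oneFormBracket ω J α β) := by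
    ext1 x; simp [sharp]
  rw [hJsharp, hsharp]
  exact J.contDiff.comp ((contDiff_sharp hα).lieBracket_vectorField (contDiff_sharp hβ) hnm)

end OneFormBracket

theorem oneFormBracket_jacobi
    (ω : E →L[ℝ] E →L[ℝ] ℝ) (hskew : ∀ u v : E, ω u v = - ω v u)
    (J : E ≃L[ℝ] (E →L[ℝ] ℝ)) (hJ : ∀ v : E, (J v : E →L[ℝ] ℝ) = ω v)
    (α β γ : E → (E →L[ℝ] ℝ))
    (hα : ContDiff ℝ (⊤ : ℕ∞) α) (hβ : ContDiff ℝ (⊤ : ℕ∞) β)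
    (hγ : ContDiff ℝ (⊤ : ℕ∞) γ) :
    oneFormBracket ω J (oneFormBracket ω J α β) γ +
      oneFormBracket ω J (oneFormBracket ω J β γ) α +
      oneFormBracket ω J (oneFormBracket ω J γ α) β = 0 := by
  have hdiff {δ : E → (E →L[ℝ] ℝ)} (hδ : ContDiff ℝ (⊤ : ℕ∞) δ) : Differentiable ℝ δ :=
    hδ.differentiable (by simp)
  have hsharp {δ₁ δ₂ δ₃ : E → (E →L[ℝ] ℝ)} (h₁ : ContDiff ℝ (⊤ : ℕ∞) δ₁)
      (h₂ : ContDiff ℝ (⊤ : ℕ∞) δ₂) (h₃ : ContDiff ℝ (⊤ : ℕ∞) δ₃) :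
      sharp J (oneFormBracket ω J (oneFormBracket ω J δ₁ δ₂) δ₃) =
        lieBracket ℝ (lieBracket ℝ (sharp J δ₁) (sharp J δ₂)) (sharp J δ₃) := by
    rw [sharp_oneFormBracket hskew hJ
        (hdiff (contDiff_oneFormBracket hskew hJ h₁ h₂ (by simp))) (hdiff h₃),
      sharp_oneFormBracket hskew hJ (hdiff h₁) (hdiff h₂)]
  ext1 x
  apply J.symm.injective
  have hjac := lieBracket_jacobi (x := x) (n := (⊤ : ℕ∞))
    (by simpa using WithTop.coe_le_coe.2 (le_top (a := (2 : ℕ∞))))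
    (contDiff_sharp (J := J) hα).contDiffAt (contDiff_sharp (J := J) hβ).contDiffAt
    (contDiff_sharp (J := J) hγ).contDiffAt
  rw [← hsharp hα hβ hγ, ← hsharp hβ hγ hα, ← hsharp hγ hα hβ] at hjac
  simpa [sharp] using hjac
end
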